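/- If a finite-dimensional Lie algebra g admits an ad-invariant nondegenerate symmetric bilinear form, then dim g = dim C^r(g) + dim C_r(g) for every r ≥ 0, where C^r and C_r denote the lower and upper central series respectively. -/

import Mathlib

/-!
With respect to an invariant form, the orthogonal of `⁅L, N⁆` is the normalizer of `N^⊥`,
because `Φ ⁅x, n⁆ m = -Φ n ⁅x, m⁆`. Since the lower central series is built by `N ↦ ⁅L, N⁆`
from `⊤` and the upper central series by taking normalizers from `⊥ = ⊤^⊥`, induction gives
`C_r = (C^r)^⊥`, and in finite dimension `dim W + dim W^⊥ = dim M` as soon as the form has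
trivial left kernel.
-/

open Module

lemma LinearMap.BilinForm.separatingRight_of_separatingLeft {K V : Type*} [Field K]
    [AddCommGroup V] [Module K V] [FiniteDimensional K V] {B : LinearMap.BilinForm K V}
    (hB : B.SeparatingLeft) : B.SeparatingRight := by
  have h := finrank_add_finrank_orthogonal' (B := B) ⊤
  rw [LinearMap.separatingLeft_iff_ker_eq_bot.mp hB, inf_bot_eq, finrank_bot, add_zero,
    finrank_top, add_eq_left, Submodule.finrank_eq_zero] at h
  intro y hy
  have hy' : y ∈ B.orthogonal ⊤ := fun x _ ↦ hy x
  simpa [h] using hy'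

namespace LieAlgebra.InvariantForm

section ring

variable {R L M : Type*} [CommRing R] [LieRing L] [LieAlgebra R L]
  [AddCommGroup M] [Module R M] [LieRingModule L M] [LieModule R L M]
  (Φ : LinearMap.BilinForm R M) (hΦ : Φ.lieInvariant L)

lemma orthogonal_lie_top_eq_normalizer (N : LieSubmodule R L M) :
    orthogonal Φ hΦ ⁅(⊤ : LieIdeal R L), N⁆ = (orthogonal Φ hΦ N).normalizer := by
  ext m
  have hspan : m ∈ orthogonal Φ hΦ ⁅(⊤ : LieIdeal R L), N⁆ ↔
      ∀ x : L, ∀ n ∈ N, Φ ⁅x, n⁆ m = 0 := by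
    calc m ∈ orthogonal Φ hΦ ⁅(⊤ : LieIdeal R L), N⁆
        ↔ LieSubmodule.toSubmodule ⁅(⊤ : LieIdeal R L), N⁆ ≤ LinearMap.ker (Φ.flip m) := by
          simp [mem_orthogonal, SetLike.le_def]
      _ ↔ ∀ x : L, ∀ n ∈ N, Φ ⁅x, n⁆ m = 0 := by
          rw [LieSubmodule.lieIdeal_oper_eq_linear_span', Submodule.span_le]
          simp only [Set.subset_def, Set.mem_ofPred_eq, LieSubmodule.mem_top, true_and,
            SetLike.mem_coe, LinearMap.mem_ker]
          exact ⟨fun h x n hn ↦ h _ ⟨x, n, hn, rfl⟩, by rintro h _ ⟨x, n, hn, rfl⟩; exact h x n hn⟩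
  simp only [hspan, LieSubmodule.mem_normalizer, mem_orthogonal]
  exact forall_congr' fun x ↦ forall₂_congr fun n _ ↦ by rw [hΦ, neg_eq_zero]

lemma ucs_eq_orthogonal_lowerCentralSeries (hΦr : Φ.SeparatingRight) (k : ℕ) :
    (⊥ : LieSubmodule R L M).ucs k = orthogonal Φ hΦ (LieModule.lowerCentralSeries R L M k) := by
  induction k with
  | zero =>
    ext y
    simp only [LieSubmodule.ucs_zero, LieSubmodule.mem_bot, LieModule.lowerCentralSeries_zero,
      mem_orthogonal, LieSubmodule.mem_top, true_implies]
    exact ⟨by rintro rfl; simp, hΦr y⟩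
  | succ k ih =>
    rw [LieSubmodule.ucs_succ, ih, LieModule.lowerCentralSeries_succ,
      orthogonal_lie_top_eq_normalizer]

end ring

lemma finrank_lowerCentralSeries_add_finrank_ucs {K L M : Type*} [Field K] [LieRing L]
    [LieAlgebra K L] [AddCommGroup M] [Module K M] [LieRingModule L M] [LieModule K L M]
    [FiniteDimensional K M] (Φ : LinearMap.BilinForm K M) (hΦ : Φ.lieInvariant L)
    (hΦl : Φ.SeparatingLeft) (k : ℕ) :
    finrank K (LieModule.lowerCentralSeries K L M k) +
      finrank K ((⊥ : LieSubmodule K L M).ucs k) = finrank K M := by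
  have h := LinearMap.BilinForm.finrank_add_finrank_orthogonal' (B := Φ)
    (LieModule.lowerCentralSeries K L M k).toSubmodule
  rwa [LinearMap.separatingLeft_iff_ker_eq_bot.mp hΦl, inf_bot_eq, finrank_bot, add_zero,
    ← orthogonal_toSubmodule Φ hΦ, ← ucs_eq_orthogonal_lowerCentralSeries Φ hΦ
    (LinearMap.BilinForm.separatingRight_of_separatingLeft hΦl)] at h

end LieAlgebra.InvariantForm

theorem finrank_eq_finrank_lcs_add_finrank_ucs_general
    {K L : Type*} [Field K] [LieRing L] [LieAlgebra K L]
    [FiniteDimensional K L]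
    (B : L →ₗ[K] L →ₗ[K] K)
    (hnd : ∀ x : L, (∀ y : L, B x y = 0) → x = 0)
    (hinv : ∀ x y z : L, B ⁅x, y⁆ z + B y ⁅x, z⁆ = 0) :
    ∀ r : ℕ, Module.finrank K L =
      Module.finrank K (LieModule.lowerCentralSeries K L L r : Submodule K L) +
      Module.finrank K (((⊥ : LieSubmodule K L L).ucs r : LieSubmodule K L L) : Submodule K L) :=
  fun r ↦ (LieAlgebra.InvariantForm.finrank_lowerCentralSeries_add_finrank_ucs B
    (fun x y z ↦ eq_neg_of_add_eq_zero_left (hinv x y z)) hnd r).symm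

/-- If g carries an ad-invariant nondegenerate symmetric bilinear form then
dim g = dim C^r(g) + dim C_r(g) for every r. -/
theorem finrank_eq_finrank_lcs_add_finrank_ucs
    {K L : Type*} [Field K] [CharZero K] [LieRing L] [LieAlgebra K L]
    [FiniteDimensional K L]
    (B : L →ₗ[K] L →ₗ[K] K)
    (hsymm : ∀ x y : L, B x y = B y x)
    (hnd : ∀ x : L, (∀ y : L, B x y = 0) → x = 0)
    (hinv : ∀ x y z : L, B ⁅x, y⁆ z + B y ⁅x, z⁆ = 0) :
    ∀ r : ℕ, Module.finrank K L =
      Module.finrank K (LieModule.lowerCentralSeries K L L r : Submodule K L) +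
      Module.finrank K (((⊥ : LieSubmodule K L L).ucs r : LieSubmodule K L L) : Submodule K L) :=
  finrank_eq_finrank_lcs_add_finrank_ucs_general B hnd hinv
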